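/- Suppose M : ℝ → ℝ and a, C₁, C₂ ∈ ℝ with a ≠ 0, and suppose that for all R in a nonempty open interval I ⊆ (0,∞) and all ϑ ∈ ℝ one has M'(R) = 4π·(Σ²/R²)·F₁(R)·F₂(ϑ), where Σ = R² + a²cos²ϑ, F₁(R) = −2/(C₁R² + C₂), F₂(ϑ) = −2C₃/(a²C₁cos(2ϑ) + a²C₁ − 4C₂), with denominators nonvanishing on I × ℝ and C₃ ≠ 0. Then F₁ vanishes identically on I, i.e., there is no such nonzero separated solution. -/

import Mathlib

/-!
Clearing denominators, and writing `cos (2ϑ) = 2 cos² ϑ - 1`, the separated equation at a fixed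
`R` says that, in the variable `t = cos² ϑ ∈ [0, 1]`, the affine function
`M'(R) R² (2 a² C₁ t - 4 C₂)` equals the quadratic `-8 π C₃ F₁(R) (R² + a² t)²`. Comparing them at
three values of `t` (`ϑ = 0, π/4, π/2`) forces the leading coefficient `-8 π C₃ F₁(R) a⁴` to vanish.
-/

open Real Set

theorem mul_sq_eq_zero_of_affine_eq_mul_sq {K α β c x b s t u : ℝ}
    (hst : s ≠ t) (hsu : s ≠ u) (htu : t ≠ u)
    (hs : K * (α + β * s) = c * (x + b * s) ^ 2)
    (ht : K * (α + β * t) = c * (x + b * t) ^ 2)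
    (hu : K * (α + β * u) = c * (x + b * u) ^ 2) :
    c * b ^ 2 = 0 := by
  have hprod : c * b ^ 2 * ((s - t) * (s - u) * (t - u)) = 0 := by
    linear_combination -(t - u) * hs + (s - u) * ht - (s - t) * hu
  exact (mul_eq_zero.mp hprod).resolve_right <| by simp [sub_ne_zero, hst, hsu, htu]

theorem exists_cos_sq_eq {t : ℝ} (h0 : 0 ≤ t) (h1 : t ≤ 1) : ∃ ϑ, cos ϑ ^ 2 = t :=
  ⟨arccos √t, by rw [cos_arccos (by linarith [sqrt_nonneg t]) (sqrt_le_one.mpr h1), sq_sqrt h0]⟩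

theorem mul_affine_cos_sq_eq_of_eq_div {m f a C₁ C₂ C₃ R ϑ : ℝ} (hR : R ≠ 0)
    (hden : a ^ 2 * C₁ * cos (2 * ϑ) + a ^ 2 * C₁ - 4 * C₂ ≠ 0)
    (h : m = 4 * π * ((R ^ 2 + a ^ 2 * cos ϑ ^ 2) ^ 2 / R ^ 2) * f *
      (-2 * C₃ / (a ^ 2 * C₁ * cos (2 * ϑ) + a ^ 2 * C₁ - 4 * C₂))) :
    m * R ^ 2 * (-4 * C₂ + 2 * a ^ 2 * C₁ * cos ϑ ^ 2) =
      -8 * π * C₃ * f * (R ^ 2 + a ^ 2 * cos ϑ ^ 2) ^ 2 := by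
  have hcos : a ^ 2 * C₁ * cos (2 * ϑ) + a ^ 2 * C₁ - 4 * C₂ =
      -4 * C₂ + 2 * a ^ 2 * C₁ * cos ϑ ^ 2 := by
    rw [cos_two_mul]; ring
  rw [hcos] at hden h
  generalize -4 * C₂ + 2 * a ^ 2 * C₁ * cos ϑ ^ 2 = D at hden h ⊢
  rw [h]
  field_simp
  ring

theorem stmt13_general (M : ℝ → ℝ) (a C₁ C₂ C₃ : ℝ) (ha : a ≠ 0) (hC₃ : C₃ ≠ 0)
    (I : Set ℝ) (hIpos : I ⊆ Set.Ioi (0:ℝ))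
    (F₁ F₂ : ℝ → ℝ)
    (hF₂ : ∀ ϑ, F₂ ϑ = -2 * C₃ / (a^2 * C₁ * Real.cos (2*ϑ) + a^2 * C₁ - 4 * C₂))
    (hden2 : ∀ ϑ : ℝ, a^2 * C₁ * Real.cos (2*ϑ) + a^2 * C₁ - 4 * C₂ ≠ 0)
    (h : ∀ R ∈ I, ∀ ϑ : ℝ, deriv M R =
      4 * Real.pi * ((R^2 + a^2 * (Real.cos ϑ)^2)^2 / R^2) * F₁ R * F₂ ϑ) :
    ∀ R ∈ I, F₁ R = 0 := by
  intro R hR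
  have hcleared : ∀ t ∈ Icc (0 : ℝ) 1, deriv M R * R ^ 2 * (-4 * C₂ + 2 * a ^ 2 * C₁ * t) =
      -8 * π * C₃ * F₁ R * (R ^ 2 + a ^ 2 * t) ^ 2 := by
    rintro t ⟨ht₀, ht₁⟩
    obtain ⟨ϑ, rfl⟩ := exists_cos_sq_eq ht₀ ht₁
    exact mul_affine_cos_sq_eq_of_eq_div (hIpos hR).ne' (hden2 ϑ) (hF₂ ϑ ▸ h R hR ϑ)
  have hlead := mul_sq_eq_zero_of_affine_eq_mul_sq (s := 0) (t := 1 / 2) (u := 1)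
    (by norm_num) (by norm_num) (by norm_num) (hcleared 0 (by norm_num))
    (hcleared (1 / 2) (by norm_num)) (hcleared 1 (by norm_num))
  simpa [ha, hC₃, pi_ne_zero] using hlead

theorem stmt13 (M : ℝ → ℝ) (a C₁ C₂ C₃ : ℝ) (ha : a ≠ 0) (hC₃ : C₃ ≠ 0)
    (I : Set ℝ) (hIopen : IsOpen I) (hne : I.Nonempty) (hIpos : I ⊆ Set.Ioi (0:ℝ))
    (F₁ F₂ : ℝ → ℝ)
    (hF₁ : ∀ R, F₁ R = -2 / (C₁ * R^2 + C₂))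
    (hF₂ : ∀ ϑ, F₂ ϑ = -2 * C₃ / (a^2 * C₁ * Real.cos (2*ϑ) + a^2 * C₁ - 4 * C₂))
    (hden1 : ∀ R ∈ I, C₁ * R^2 + C₂ ≠ 0)
    (hden2 : ∀ ϑ : ℝ, a^2 * C₁ * Real.cos (2*ϑ) + a^2 * C₁ - 4 * C₂ ≠ 0)
    (h : ∀ R ∈ I, ∀ ϑ : ℝ, deriv M R =
      4 * Real.pi * ((R^2 + a^2 * (Real.cos ϑ)^2)^2 / R^2) * F₁ R * F₂ ϑ) :
    ∀ R ∈ I, F₁ R = 0 :=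
  stmt13_general M a C₁ C₂ C₃ ha hC₃ I hIpos F₁ F₂ hF₂ hden2 h
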